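/- (Theorem 1 of the paper.) Under Assumption 1, a vector b ∈ ℝ^K belongs to the finite sample identified set B*_n if and only if for every i = 1, …, n: E[(2Y_i − 1)·1{X_i b ≥ 0}] ≥ 0 and E[(2Y_i − 1)·1{X_i b ≤ 0}] ≤ 0. -/

import Mathlib

/-! The conditions say that `P(Yᵢ = 1) ≥ 1/2` when `Xᵢb ≥ 0` and `P(Yᵢ = 1) ≤ 1/2` when `Xᵢb ≤ 0`.
Necessity: `P(Yᵢ = 1) = P(Xᵢb + Ũᵢ ≥ 0)`, which compares with the median `P(Ũᵢ ≥ 0) = 1/2` according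
to the sign of `Xᵢb`.
Sufficiency: keep `Ỹ = Y` and let `Ũᵢ` depend only on the signs of `Uᵢ` and of `Xᵢβ + Uᵢ`, with the
sign of `Uᵢ`, so that the median and independence conditions carry over verbatim. Such a choice
reproduces `Yᵢ` except on `{Uᵢ ≥ 0 > Xᵢβ + Uᵢ}` when `Xᵢb ≥ 0`, resp. `{Uᵢ < 0 ≤ Xᵢβ + Uᵢ}` when
`Xᵢb ≤ 0`. Since the level sets `{Uᵢ ≥ 0}` and `{Xᵢβ + Uᵢ ≥ 0}` are nested, the conditions make
these events null. -/

open MeasureTheory ProbabilityTheory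

/-- Membership in the finite sample identified set `B*_n`. -/
def memFSID {Ω : Type*} [MeasurableSpace Ω] (P : Measure Ω) {n K : ℕ}
    (X : Fin n → Fin K → ℝ) (Y : Fin n → Ω → ℝ) (b : Fin K → ℝ) : Prop :=
  ∃ Yt Ut : Fin n → Ω → ℝ,
    (∀ i, Measurable (Yt i)) ∧ (∀ i, Measurable (Ut i)) ∧
    (∀ i, ∀ᵐ ω ∂P, Yt i ω = if 0 ≤ (∑ j, X i j * b j) + Ut i ω then 1 else 0) ∧
    Measure.map (fun ω => fun i => Yt i ω) P =
      Measure.map (fun ω => fun i => Y i ω) P ∧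
    (∀ i, P {ω | 0 ≤ Ut i ω} = 1/2) ∧
    iIndepFun
      (fun i ω => if 0 ≤ Ut i ω then (1 : ℝ) else 0) P

section LatentError

variable (c : ℝ) (s y : Prop) [Decidable s] [Decidable y]

noncomputable def latentError : ℝ :=
  if s then (if y then |c| + 1 else 0)
  else if y then (if 0 < c then -c / 2 else -1) else -(|c| + 1)

lemma latentError_nonneg_iff : 0 ≤ latentError c s y ↔ s := by
  unfold latentError
  split_ifs <;> simp_all <;> linarith [abs_nonneg c]

variable {c s y}

lemma add_latentError_nonneg_iff (hs : s → ¬y → c < 0) (hy : ¬s → y → 0 < c) :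
    0 ≤ c + latentError c s y ↔ y := by
  unfold latentError
  split_ifs <;> simp_all <;> linarith [neg_abs_le c, le_abs_self c]

end LatentError

def MedianSignCompatible (c p : ℝ) : Prop :=
  (0 ≤ c → 1 / 2 ≤ p) ∧ (c ≤ 0 → p ≤ 1 / 2)

section Measure

variable {Ω : Type*} [MeasurableSpace Ω] {P : Measure Ω}

lemma measurable_latentError {c : ℝ} {p q : Ω → Prop} [DecidablePred p] [DecidablePred q]
    (hp : MeasurableSet {ω | p ω}) (hq : MeasurableSet {ω | q ω}) :
    Measurable fun ω => latentError c (p ω) (q ω) :=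
  Measurable.ite hp (Measurable.ite hq measurable_const measurable_const)
    (Measurable.ite hq measurable_const measurable_const)

lemma integral_ite_one_zero {p : Ω → Prop} [DecidablePred p] (hp : MeasurableSet {ω | p ω}) :
    ∫ ω, (if p ω then (1 : ℝ) else 0) ∂P = P.real {ω | p ω} := by
  rw [← integral_indicator_one hp]
  simp only [Set.indicator_apply, Set.mem_ofPred_eq, Pi.one_apply]

lemma ae_le_of_measureReal_le_of_nested [IsFiniteMeasure P] {A B : Set Ω}
    (hAB : A ⊆ B ∨ B ⊆ A) (hB : MeasurableSet B) (h : P.real A ≤ P.real B) : A ≤ᵐ[P] B := by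
  rcases hAB with hAB | hBA
  · exact hAB.eventuallyLE
  · have hle : P A ≤ P B := (ENNReal.toReal_le_toReal (measure_ne_top P A)
      (measure_ne_top P B)).mp h
    exact (ae_eq_of_subset_of_measure_ge hBA hle hB.nullMeasurableSet
      (measure_ne_top P A)).symm.le

lemma medianSignCompatible_measureReal_add_nonneg [IsFiniteMeasure P] {V : Ω → ℝ}
    (hmed : P.real {ω | 0 ≤ V ω} = 1 / 2) (c : ℝ) :
    MedianSignCompatible c (P.real {ω | 0 ≤ c + V ω}) := by
  refine ⟨fun hc => hmed ▸ measureReal_mono fun ω hω => ?_,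
    fun hc => hmed ▸ measureReal_mono fun ω hω => ?_⟩ <;>
  simp only [Set.mem_ofPred_eq] at hω ⊢ <;> linarith

lemma integral_conditions_iff_medianSignCompatible [IsProbabilityMeasure P] {Y : Ω → ℝ}
    (hY : Integrable Y P) (c : ℝ) :
    (0 ≤ ∫ ω, (2 * Y ω - 1) * (if 0 ≤ c then 1 else 0) ∂P ∧
      ∫ ω, (2 * Y ω - 1) * (if c ≤ 0 then 1 else 0) ∂P ≤ 0) ↔
      MedianSignCompatible c (∫ ω, Y ω ∂P) := by
  have hlin : ∀ k : ℝ, ∫ ω, (2 * Y ω - 1) * k ∂P = (2 * ∫ ω, Y ω ∂P - 1) * k := fun k => by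
    rw [integral_mul_const, integral_sub (hY.const_mul 2) (integrable_const 1),
      integral_const_mul, integral_const, probReal_univ, one_smul]
  rw [hlin, hlin, MedianSignCompatible]
  refine and_congr ?_ ?_ <;> split_ifs <;> simp_all <;> constructor <;> intro <;> linarith

lemma ae_add_latentError_nonneg_iff [IsFiniteMeasure P] {U : Ω → ℝ} (hU : Measurable U)
    {a c : ℝ} (hmed : P.real {ω | 0 ≤ U ω} = 1 / 2)
    (hcompat : MedianSignCompatible c (P.real {ω | 0 ≤ a + U ω})) :
    ∀ᵐ ω ∂P, (0 ≤ c + latentError c (0 ≤ U ω) (0 ≤ a + U ω) ↔ 0 ≤ a + U ω) := by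
  have hnested : {ω | 0 ≤ U ω} ⊆ {ω | 0 ≤ a + U ω} ∨ {ω | 0 ≤ a + U ω} ⊆ {ω | 0 ≤ U ω} := by
    rcases le_total 0 a with ha | ha
    · exact .inl fun ω (hω : 0 ≤ U ω) => show 0 ≤ a + U ω by linarith
    · exact .inr fun ω (hω : 0 ≤ a + U ω) => show 0 ≤ U ω by linarith
  have hs : ∀ᵐ ω ∂P, 0 ≤ U ω → ¬0 ≤ a + U ω → c < 0 := by
    rcases lt_or_ge c 0 with hc | hc
    · exact .of_forall fun _ _ _ => hc
    · filter_upwards [ae_le_of_measureReal_le_of_nested hnested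
        (measurableSet_le measurable_const (hU.const_add a))
        (hmed ▸ hcompat.1 hc)] with ω hω hUω haUω
      exact absurd (hω hUω) haUω
  have hy : ∀ᵐ ω ∂P, ¬0 ≤ U ω → 0 ≤ a + U ω → 0 < c := by
    rcases lt_or_ge 0 c with hc | hc
    · exact .of_forall fun _ _ _ => hc
    · filter_upwards [ae_le_of_measureReal_le_of_nested hnested.symm
        (measurableSet_le measurable_const hU) (hmed ▸ hcompat.2 hc)] with ω hω hUω haUω
      exact absurd (hω haUω) hUω
  filter_upwards [hs, hy] with ω using add_latentError_nonneg_iff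

end Measure

theorem theorem1_finite_sample_identified_set
    {Ω : Type*} [MeasurableSpace Ω] (P : Measure Ω) [IsProbabilityMeasure P]
    {n K : ℕ}
    (X : Fin n → Fin K → ℝ) (β : Fin K → ℝ)
    (U : Fin n → Ω → ℝ) (hU : ∀ i, Measurable (U i))
    (Y : Fin n → Ω → ℝ)
    (hY : ∀ i ω, Y i ω = if 0 ≤ (∑ j, X i j * β j) + U i ω then 1 else 0)
    (hmed : ∀ i, P {ω | 0 ≤ U i ω} = 1/2)
    (hindep : iIndepFun
      (fun i ω => if 0 ≤ U i ω then (1 : ℝ) else 0) P)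
    (b : Fin K → ℝ) :
    memFSID P X Y b ↔
      ∀ i : Fin n,
        0 ≤ (∫ ω, (2 * Y i ω - 1) *
              (if 0 ≤ (∑ j, X i j * b j) then 1 else 0) ∂P) ∧
        (∫ ω, (2 * Y i ω - 1) *
              (if (∑ j, X i j * b j) ≤ 0 then 1 else 0) ∂P) ≤ 0 := by
  have hYeq (i) : Y i = fun ω => if 0 ≤ (∑ j, X i j * β j) + U i ω then 1 else 0 := funext (hY i)
  have hlevel (i) : MeasurableSet {ω | 0 ≤ (∑ j, X i j * β j) + U i ω} :=
    measurableSet_le measurable_const ((hU i).const_add _)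
  have hYm (i) : Measurable (Y i) :=
    hYeq i ▸ Measurable.ite (hlevel i) measurable_const measurable_const
  have hYint (i) : Integrable (Y i) P := hYeq i ▸ (integrable_const 1).indicator (hlevel i)
  have hhalf (i) : P.real {ω | 0 ≤ U i ω} = 1 / 2 := by simp [measureReal_def, hmed i]
  rw [forall_congr' fun i => integral_conditions_iff_medianSignCompatible (hYint i) _]
  constructor
  · rintro ⟨Yt, Ut, hYtm, hUtm, hae, hmap, hUtmed, -⟩ i
    have hlaw : IdentDistrib (fun ω i => Yt i ω) (fun ω i => Y i ω) P P :=
      ⟨(measurable_pi_lambda _ hYtm).aemeasurable, (measurable_pi_lambda _ hYm).aemeasurable, hmap⟩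
    have hEY : ∫ ω, Y i ω ∂P = ∫ ω, Yt i ω ∂P :=
      (hlaw.comp (measurable_pi_apply i)).integral_eq.symm
    rw [hEY, integral_congr_ae (hae i),
      integral_ite_one_zero (measurableSet_le measurable_const ((hUtm i).const_add _))]
    exact medianSignCompatible_measureReal_add_nonneg (by simp [measureReal_def, hUtmed i]) _
  · intro hcompat
    refine ⟨Y, fun i ω => latentError (∑ j, X i j * b j) (0 ≤ U i ω)
      (0 ≤ (∑ j, X i j * β j) + U i ω), hYm,
      fun i => measurable_latentError (measurableSet_le measurable_const (hU i)) (hlevel i),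
      fun i => ?_, rfl, fun i => ?_, ?_⟩
    · have hEY : ∫ ω, Y i ω ∂P = P.real {ω | 0 ≤ (∑ j, X i j * β j) + U i ω} := by
        rw [hYeq i]; exact integral_ite_one_zero (hlevel i)
      filter_upwards [ae_add_latentError_nonneg_iff (hU i) (hhalf i) (hEY ▸ hcompat i)] with ω hω
      rw [hY i ω, if_congr hω rfl rfl]
    · simpa only [latentError_nonneg_iff] using hmed i
    · simpa only [latentError_nonneg_iff] using hindep
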